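/- arXiv:1101.0596 — 2 statements merged into one kernel-verified Lean document; each statement's English description precedes it below -/
import Mathlib

section
/- For every integer k ≥ 0, the polynomial P_k(x) = ∏_{j=-(k-1)/2}^{(k-1)/2} (x+j) satisfies the identity D²P_k = k(k-1)P_{k-2}, where D²f(x) = f(x+1) - 2f(x) + f(x-1) is the symmetric second difference operator. -/
/-- `P k x = ∏_{j=-(k-1)/2}^{(k-1)/2} (x + j)`, the product over the `k` equally
spaced values `j = -(k-1)/2, -(k-1)/2 + 1, ..., (k-1)/2`. -/
noncomputable def P (k : ℕ) (x : ℝ) : ℝ :=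
  ∏ j ∈ Finset.range k, (x + (j : ℝ) - ((k : ℝ) - 1) / 2)

/-! Shifting the argument of `P_{m+1}` by `±1/2` turns it into `P_m` times one extra linear
factor. Applying this twice, `P_{m+2}(x+1)`, `P_{m+2}(x)` and `P_{m+2}(x-1)` are all `P_m(x)`
times a quadratic, and the second difference of these quadratics is `(m+2)(m+1)`. -/

lemma P_succ_add_half (m : ℕ) (x : ℝ) :
    P (m + 1) (x + 1 / 2) = P m x * (x + ((m : ℝ) + 1) / 2) := by
  unfold P
  rw [Finset.prod_range_succ]
  push_cast
  congr 1
  · exact Finset.prod_congr rfl fun j _ => by ring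
  · ring

lemma P_succ_sub_half (m : ℕ) (x : ℝ) :
    P (m + 1) (x - 1 / 2) = P m x * (x - ((m : ℝ) + 1) / 2) := by
  unfold P
  rw [Finset.prod_range_succ']
  push_cast
  congr 1
  · exact Finset.prod_congr rfl fun j _ => by ring
  · ring

lemma P_add_two_add_one (m : ℕ) (x : ℝ) :
    P (m + 2) (x + 1) = P m x * (x + ((m : ℝ) + 1) / 2) * (x + ((m : ℝ) + 3) / 2) := by
  rw [show x + 1 = x + 1 / 2 + 1 / 2 by ring, P_succ_add_half, P_succ_add_half]
  push_cast
  ring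

lemma P_add_two (m : ℕ) (x : ℝ) :
    P (m + 2) x = P m x * (x + ((m : ℝ) + 1) / 2) * (x - ((m : ℝ) + 1) / 2) := by
  have h := P_succ_sub_half (m + 1) (x + 1 / 2)
  rw [add_sub_cancel_right, P_succ_add_half] at h
  rw [h]
  push_cast
  ring

lemma P_add_two_sub_one (m : ℕ) (x : ℝ) :
    P (m + 2) (x - 1) = P m x * (x - ((m : ℝ) + 1) / 2) * (x - ((m : ℝ) + 3) / 2) := by
  rw [show x - 1 = x - 1 / 2 - 1 / 2 by ring, P_succ_sub_half, P_succ_sub_half]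
  push_cast
  ring

/-- The symmetric second difference `D²P_k(x) = P_k(x+1) - 2 P_k(x) + P_k(x-1)`
equals `k (k-1) P_{k-2}(x)`. -/
theorem stmt0 (k : ℕ) (x : ℝ) :
    P k (x + 1) - 2 * P k x + P k (x - 1) = (k : ℝ) * ((k : ℝ) - 1) * P (k - 2) x := by
  match k with
  | 0 => norm_num [P]
  | 1 => simp [P]; ring
  | m + 2 =>
    rw [P_add_two_add_one, P_add_two, P_add_two_sub_one, Nat.add_sub_cancel]
    push_cast
    ring
end

section
/- Let φ(re^{iθ}) = ∑_{|k|≤N} a_k(r) e^{ikθ} with smooth a_k supported in [r_0, r_1] ⊂ (0,∞), and let ψ(z,t,R) = ∑_{|k|≤N} a_k(√(t/(πR²))) p_k(z) (√(t/π))^{-|k|}, where p_k are the discrete harmonic polynomials with |p_k(z) - z^k| ≤ C_k|z|^{|k|-1}. Then there is a constant C such that whenever c₁R² ≤ t ≤ c₂R² and ||z| - √(t/π)| ≤ C₀ log R, one has |ψ(z,t,R) - φ(z/R)| ≤ C (log R)/R. -/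
open Complex

/-- `φ(re^{iθ}) = ∑_{|k|≤N} a_k(r) e^{ikθ}`. -/
noncomputable def phiFun (N : ℕ) (a : ℤ → ℝ → ℂ) (z : ℂ) : ℂ :=
  ∑ k ∈ Finset.Icc (-(N : ℤ)) (N : ℤ),
    a k ‖z‖ * Complex.exp ((k : ℂ) * (Complex.arg z : ℂ) * Complex.I)

/-- `ψ(z,t,R) = ∑_{|k|≤N} a_k(√(t/(πR²))) p_k(z) (√(t/π))^{-|k|}`. -/
noncomputable def psiFun (N : ℕ) (a : ℤ → ℝ → ℂ) (p : ℤ → ℂ → ℂ)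
    (z : ℂ) (t R : ℝ) : ℂ :=
  ∑ k ∈ Finset.Icc (-(N : ℤ)) (N : ℤ),
    a k (Real.sqrt (t / (Real.pi * R ^ 2))) * p k z *
      ((Real.sqrt (t / Real.pi) : ℂ)) ^ (-(k.natAbs : ℤ))

lemma aux_pow_sub_one (n : ℕ) {B v : ℝ} (hB : 1 ≤ B) (hv : 0 ≤ v) (hvB : v ≤ B) :
    |v ^ n - 1| ≤ n * B ^ n * |v - 1| := by
  induction n with
  | zero => simp
  | succ n ih =>
    have hBn : (1:ℝ) ≤ B ^ n := one_le_pow₀ hB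
    have h1 : v ^ (n+1) - 1 = v * (v ^ n - 1) + (v - 1) := by ring
    have h2 : |v ^ (n+1) - 1| ≤ v * |v ^ n - 1| + |v - 1| := by
      rw [h1]
      refine (abs_add_le _ _).trans ?_
      rw [abs_mul, _root_.abs_of_nonneg hv]
    have h3 : v * |v ^ n - 1| ≤ B * (n * B ^ n * |v - 1|) :=
      mul_le_mul hvB ih (abs_nonneg _) (by linarith)
    have habs : (0:ℝ) ≤ |v - 1| := abs_nonneg _
    have h4 : |v^(n+1) - 1| ≤ B * (n * B^n * |v-1|) + |v-1| := by linarith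
    refine h4.trans ?_
    rw [pow_succ]
    push_cast
    nlinarith [mul_le_mul hBn hB zero_le_one (by linarith : (0:ℝ) ≤ B^n),
      mul_nonneg (mul_nonneg (Nat.cast_nonneg (α := ℝ) n) (by nlinarith : (0:ℝ) ≤ B^n * B)) habs]


lemma aux_lip (f : ℝ → ℂ) (r0 r1 : ℝ) (hs : ContDiff ℝ (⊤ : ℕ∞) f)
    (hsupp : Function.support f ⊆ Set.Icc r0 r1) :
    ∃ L : ℝ, 0 ≤ L ∧ (∀ x y : ℝ, ‖f x - f y‖ ≤ L * |x - y|) ∧ (∀ x, ‖f x‖ ≤ L) := by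
  have hcs : HasCompactSupport f := by
    rw [HasCompactSupport]
    exact IsCompact.of_isClosed_subset isCompact_Icc isClosed_closure
      (closure_minimal hsupp isClosed_Icc)
  have hd : Differentiable ℝ f := hs.differentiable (by simp)
  have hcd : Continuous (deriv f) := hs.continuous_deriv (by simp)
  obtain ⟨L1, hL1⟩ := (hcs.deriv).exists_bound_of_continuous hcd
  obtain ⟨L2, hL2⟩ := hcs.exists_bound_of_continuous hs.continuous
  set L : ℝ := max (max L1 L2) 0 with hLdef
  have bound : ∀ z ∈ (Set.univ : Set ℝ), ‖deriv f z‖ ≤ L :=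
    fun z _ => (hL1 z).trans (le_max_of_le_left (le_max_left _ _))
  refine ⟨L, le_max_right _ _, fun x y => ?_, fun x => ?_⟩
  · have := Convex.norm_image_sub_le_of_norm_deriv_le (s := Set.univ)
      (fun z _ => hd z) bound convex_univ (Set.mem_univ y) (Set.mem_univ x)
    simpa [Real.norm_eq_abs] using this
  · exact (hL2 x).trans (le_max_of_le_left (le_max_right _ _))

set_option maxHeartbeats 1600000 in
lemma keyTerm (a : ℝ → ℂ) (r0 r1 : ℝ) (hr0 : 0 < r0)
    (L : ℝ) (hL0 : 0 ≤ L) (hlip : ∀ x y : ℝ, ‖a x - a y‖ ≤ L * |x - y|)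
    (hbd : ∀ x, ‖a x‖ ≤ L)
    (hsupp : Function.support a ⊆ Set.Icc r0 r1)
    (pk : ℂ → ℂ) (n : ℕ) (hn : 1 ≤ n)
    (Cp' : ℝ) (hCp' : 0 ≤ Cp')
    (hpk : ∀ z : ℂ, ‖pk z - z ^ n‖ ≤ Cp' * ‖z‖ ^ (n - 1))
    (c1 c2 C0 : ℝ) (hc1 : 0 < c1) (hC0 : 0 < C0) :
    ∃ Ck : ℝ, 0 ≤ Ck ∧ ∀ R : ℝ, 2 ≤ R → ∀ t : ℝ, c1 * R ^ 2 ≤ t → t ≤ c2 * R ^ 2 →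
      ∀ z : ℂ, |‖z‖ - Real.sqrt (t / Real.pi)| ≤ C0 * Real.log R →
      ‖a (Real.sqrt (t / (Real.pi * R ^ 2))) * pk z *
            ((Real.sqrt (t / Real.pi) : ℂ)) ^ (-(n : ℤ))
          - a (‖z / (R : ℂ)‖) *
            Complex.exp ((n : ℂ) * (Complex.arg (z / (R : ℂ)) : ℂ) * Complex.I)‖
        ≤ Ck * Real.log R / R := by
  have hπ : (0:ℝ) < Real.pi := Real.pi_pos
  set S1 : ℝ := Real.sqrt (c1 / Real.pi) with hS1def
  have hS1 : 0 < S1 := Real.sqrt_pos.mpr (div_pos hc1 hπ)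
  set K : ℝ := 1 + C0 / S1 with hKdef
  have hK1 : (1:ℝ) ≤ K := by
    have : 0 < C0 / S1 := div_pos hC0 hS1
    simp only [hKdef]; linarith
  have hK0 : (0:ℝ) ≤ K := by linarith
  have hKn : (0:ℝ) ≤ K ^ n := pow_nonneg hK0 n
  set B : ℝ := K ^ n * (1 + Cp' / (2 * S1)) with hBdef
  have hB0 : (0:ℝ) ≤ B := by positivity
  have hlog2 : (0:ℝ) < Real.log 2 := Real.log_pos (by norm_num)
  refine ⟨L * C0 * B + L * (Cp' * K ^ n / (S1 * Real.log 2))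
      + L * ((n : ℝ) * K ^ n * C0 / S1), by positivity, ?_⟩
  intro R hR t ht1 ht2 z hz
  have hR0 : (0:ℝ) < R := by linarith
  have hlogR : Real.log 2 ≤ Real.log R := Real.log_le_log (by norm_num) hR
  have hlogpos : (0:ℝ) < Real.log R := lt_of_lt_of_le hlog2 hlogR
  have hlogleR : Real.log R ≤ R := by
    have := Real.log_le_sub_one_of_pos hR0
    linarith
  have ht0 : (0:ℝ) < t := lt_of_lt_of_le (by positivity) ht1
  set m : ℝ := Real.sqrt (t / Real.pi) with hmdef
  have hm0 : (0:ℝ) < m := Real.sqrt_pos.mpr (by positivity)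
  have hmlow : S1 * R ≤ m := by
    have h1 : (c1 / Real.pi) * R ^ 2 ≤ t / Real.pi := by
      rw [div_mul_eq_mul_div]
      exact div_le_div_of_nonneg_right ht1 hπ.le
    calc S1 * R = Real.sqrt ((c1 / Real.pi) * R ^ 2) := by
          rw [Real.sqrt_mul (by positivity) (R ^ 2), Real.sqrt_sq hR0.le]
      _ ≤ m := Real.sqrt_le_sqrt h1
  have hsR : Real.sqrt (t / (Real.pi * R ^ 2)) = m / R := by
    rw [show t / (Real.pi * R ^ 2) = (t / Real.pi) / R ^ 2 by ring,
      Real.sqrt_div (by positivity) (R ^ 2), Real.sqrt_sq hR0.le]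
  set u : ℝ := ‖z‖ with hudef
  have hu0 : (0:ℝ) ≤ u := norm_nonneg z
  have hum : u ≤ K * m := by
    have h1 : u ≤ m + C0 * Real.log R := by
      have := abs_le.mp hz
      linarith [this.2]
    have h2 : C0 * Real.log R ≤ C0 * R := by gcongr
    have h3 : C0 * R ≤ (C0 / S1) * m := by
      rw [div_mul_eq_mul_div, le_div_iff₀ hS1]
      calc C0 * R * S1 = C0 * (S1 * R) := by ring
        _ ≤ C0 * m := by gcongr
    calc u ≤ m + (C0 / S1) * m := by linarith
      _ = K * m := by rw [hKdef]; ring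
  have habsw : ‖z / (R : ℂ)‖ = u / R := by
    rw [norm_div]
    simp [abs_of_pos hR0, hudef]
  have hmc : ((m : ℂ)) ^ (-(n : ℤ)) = (((m ^ n : ℝ))⁻¹ : ℂ) := by
    rw [zpow_neg, zpow_natCast]
    norm_cast
  rw [hsR, habsw, hmc]
  have hmn0 : (0:ℝ) < m ^ n := pow_pos hm0 n
  have hmsucc : m ^ (n - 1) * m = m ^ n := by
    rw [← pow_succ]
    congr 1
    omega
  have h2S1 : 2 * S1 ≤ m := by nlinarith
  -- bound on ‖pk z * minv‖
  have hpkz : ‖pk z‖ ≤ u ^ n + Cp' * u ^ (n - 1) := by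
    have h1 : ‖pk z‖ ≤ ‖(z : ℂ) ^ n‖ + ‖pk z - z ^ n‖ := by
      calc ‖pk z‖ = ‖z ^ n + (pk z - z ^ n)‖ := by ring_nf
        _ ≤ ‖(z : ℂ) ^ n‖ + ‖pk z - z ^ n‖ := norm_add_le _ _
    have h2 : ‖(z : ℂ) ^ n‖ = u ^ n := by
      rw [norm_pow]
    have h3 : ‖pk z - z ^ n‖ ≤ Cp' * u ^ (n - 1) := by
      have := hpk z
      exact this
    linarith
  have hun : u ^ n ≤ K ^ n * m ^ n := by
    calc u ^ n ≤ (K * m) ^ n := pow_le_pow_left₀ hu0 hum n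
      _ = K ^ n * m ^ n := mul_pow K m n
  have hun1 : u ^ (n - 1) ≤ K ^ n * m ^ (n - 1) := by
    calc u ^ (n - 1) ≤ (K * m) ^ (n - 1) := pow_le_pow_left₀ hu0 hum (n - 1)
      _ = K ^ (n - 1) * m ^ (n - 1) := mul_pow K m (n - 1)
      _ ≤ K ^ n * m ^ (n - 1) := by
          gcongr
          · exact Nat.sub_le n 1
  have hminv : ‖(((m ^ n : ℝ))⁻¹ : ℂ)‖ = (m ^ n)⁻¹ := by
    rw [norm_inv, Complex.norm_real, Real.norm_eq_abs, _root_.abs_of_pos hmn0]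
  have hBp : ‖pk z * (((m ^ n : ℝ))⁻¹ : ℂ)‖ ≤ B := by
    rw [norm_mul, hminv]
    have e4 : Cp' * u ^ (n - 1) ≤ Cp' / (2 * S1) * (K ^ n * m ^ n) := by
      rw [div_mul_eq_mul_div, le_div_iff₀ (by positivity)]
      calc Cp' * u ^ (n - 1) * (2 * S1) ≤ Cp' * (K ^ n * m ^ (n - 1)) * m := by
            gcongr
        _ = Cp' * (K ^ n * (m ^ (n - 1) * m)) := by ring
        _ = Cp' * (K ^ n * m ^ n) := by rw [hmsucc]
    have hedq : B * m ^ n = K ^ n * m ^ n + Cp' / (2 * S1) * (K ^ n * m ^ n) := by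
      rw [hBdef]; ring
    calc ‖pk z‖ * (m ^ n)⁻¹ ≤ (u ^ n + Cp' * u ^ (n - 1)) * (m ^ n)⁻¹ := by
          gcongr
      _ ≤ (B * m ^ n) * (m ^ n)⁻¹ := by
          gcongr
          linarith
      _ = B := by field_simp
  -- D1 bound
  have hD1 : ‖a (m / R) - a (u / R)‖ ≤ L * (C0 * Real.log R / R) := by
    have h1 := hlip (m / R) (u / R)
    have h2 : |m / R - u / R| = |u - m| / R := by
      rw [div_sub_div_same, abs_div, _root_.abs_of_pos hR0, abs_sub_comm]
    rw [h2] at h1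
    refine h1.trans ?_
    gcongr
  by_cases ha : a (u / R) = 0
  · have heq : a (m / R) * pk z * (((m ^ n : ℝ)) : ℂ)⁻¹
        - a (u / R) * Complex.exp ((n : ℂ) * (Complex.arg (z / (R : ℂ)) : ℂ) * Complex.I)
        = (a (m / R) - a (u / R)) * (pk z * (((m ^ n : ℝ)) : ℂ)⁻¹) := by
      rw [ha]; ring
    rw [heq, norm_mul]
    have h1 : (0:ℝ) ≤ L * (Cp' * K ^ n / (S1 * Real.log 2)) := by positivity
    have h2 : (0:ℝ) ≤ L * ((n : ℝ) * K ^ n * C0 / S1) := by positivity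
    calc ‖a (m / R) - a (u / R)‖ * ‖pk z * (((m ^ n : ℝ)) : ℂ)⁻¹‖
        ≤ (L * (C0 * Real.log R / R)) * B :=
          mul_le_mul hD1 hBp (norm_nonneg _) (by positivity)
      _ = (L * C0 * B) * Real.log R / R := by ring
      _ ≤ (L * C0 * B + L * (Cp' * K ^ n / (S1 * Real.log 2))
            + L * ((n : ℝ) * K ^ n * C0 / S1)) * Real.log R / R := by
          gcongr
          linarith
  · have hmem : u / R ∈ Set.Icc r0 r1 := hsupp (Function.mem_support.mpr ha)
    have hu1 : r0 * R ≤ u := by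
      have h := hmem.1
      rw [le_div_iff₀ hR0] at h
      linarith
    have hupos : (0:ℝ) < u := lt_of_lt_of_le (by positivity) hu1
    have hz0 : z ≠ 0 := by
      intro h
      have : u = 0 := by rw [hudef, h]; simp
      linarith
    have hRne : (R : ℂ) ≠ 0 := by exact_mod_cast hR0.ne'
    have hucne : ((u : ℝ) : ℂ) ≠ 0 := by exact_mod_cast hupos.ne'
    have he : Complex.exp ((n : ℂ) * (Complex.arg (z / (R : ℂ)) : ℂ) * Complex.I)
        = z ^ n * ((((u ^ n : ℝ)) : ℂ))⁻¹ := by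
      have h1 : (‖z / (R : ℂ)‖ : ℂ)
          * Complex.exp ((Complex.arg (z / (R : ℂ)) : ℂ) * Complex.I) = z / (R : ℂ) :=
        Complex.norm_mul_exp_arg_mul_I _
      rw [habsw] at h1
      have hruc : (((u / R : ℝ)) : ℂ) ≠ 0 := by
        exact_mod_cast (by positivity : (0:ℝ) < u / R).ne'
      have h2 : Complex.exp ((Complex.arg (z / (R : ℂ)) : ℂ) * Complex.I)
          = (z / (R : ℂ)) / (((u / R : ℝ)) : ℂ) := by
        rw [eq_div_iff hruc, mul_comm]
        exact h1
      calc Complex.exp ((n : ℂ) * (Complex.arg (z / (R : ℂ)) : ℂ) * Complex.I)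
          = Complex.exp ((n : ℂ) * ((Complex.arg (z / (R : ℂ)) : ℂ) * Complex.I)) := by
            rw [mul_assoc]
        _ = (Complex.exp ((Complex.arg (z / (R : ℂ)) : ℂ) * Complex.I)) ^ n :=
            Complex.exp_nat_mul _ n
        _ = ((z / (R : ℂ)) / (((u / R : ℝ)) : ℂ)) ^ n := by rw [h2]
        _ = (z / ((u : ℝ) : ℂ)) ^ n := by
            congr 1
            push_cast
            field_simp
        _ = z ^ n * (((u : ℝ) : ℂ) ^ n)⁻¹ := by rw [div_pow, div_eq_mul_inv]
        _ = z ^ n * ((((u ^ n : ℝ)) : ℂ))⁻¹ := by norm_cast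
    rw [he]
    have hpkd : ‖pk z - z ^ n‖ ≤ Cp' * u ^ (n - 1) := by
      have := hpk z
      exact this
    have hT2i : ‖(pk z - z ^ n) * ((((m ^ n : ℝ)) : ℂ))⁻¹‖
        ≤ Cp' * K ^ n / (S1 * Real.log 2) * Real.log R / R := by
      rw [norm_mul, hminv]
      calc ‖pk z - z ^ n‖ * (m ^ n)⁻¹ ≤ (Cp' * u ^ (n - 1)) * (m ^ n)⁻¹ := by
            gcongr
        _ ≤ Cp' * K ^ n / (S1 * R) := by
            rw [← div_eq_mul_inv, div_le_div_iff₀ hmn0 (by positivity)]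
            calc Cp' * u ^ (n - 1) * (S1 * R) ≤ Cp' * (K ^ n * m ^ (n - 1)) * m := by
                  gcongr
              _ = Cp' * K ^ n * (m ^ (n - 1) * m) := by ring
              _ = Cp' * K ^ n * m ^ n := by rw [hmsucc]
        _ ≤ Cp' * K ^ n / (S1 * Real.log 2) * Real.log R / R := by
            have hrw : Cp' * K ^ n / (S1 * Real.log 2) * Real.log R / R
                = Cp' * K ^ n * Real.log R / (S1 * Real.log 2 * R) := by ring
            rw [hrw, div_le_div_iff₀ (by positivity) (by positivity)]
            calc Cp' * K ^ n * (S1 * Real.log 2 * R)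
                = (Cp' * K ^ n * S1 * R) * Real.log 2 := by ring
              _ ≤ (Cp' * K ^ n * S1 * R) * Real.log R := by
                  have hpos : (0:ℝ) ≤ Cp' * K ^ n * S1 * R := by positivity
                  exact mul_le_mul_of_nonneg_left hlogR hpos
              _ = Cp' * K ^ n * Real.log R * (S1 * R) := by ring
    have hT3i : ‖z ^ n * (((((m ^ n : ℝ)) : ℂ))⁻¹ - ((((u ^ n : ℝ)) : ℂ))⁻¹)‖
        ≤ (n : ℝ) * K ^ n * C0 / S1 * Real.log R / R := by
      have hc : ((((m ^ n : ℝ)) : ℂ))⁻¹ - ((((u ^ n : ℝ)) : ℂ))⁻¹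
          = ((((m ^ n)⁻¹ - (u ^ n)⁻¹ : ℝ)) : ℂ) := by push_cast; ring
      rw [norm_mul, hc, Complex.norm_real, Real.norm_eq_abs, norm_pow]
      have hun0 : (0:ℝ) < u ^ n := pow_pos hupos n
      have heq2 : u ^ n * |(m ^ n)⁻¹ - (u ^ n)⁻¹| = |(u / m) ^ n - 1| := by
        rw [← _root_.abs_of_pos hun0, ← abs_mul]
        congr 1
        rw [div_pow]
        field_simp
        rw [_root_.abs_of_pos hun0]
      rw [heq2]
      have hvK : u / m ≤ K := by
        rw [div_le_iff₀ hm0]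
        linarith [hum]
      have hpow := aux_pow_sub_one n hK1 (div_nonneg hu0 hm0.le) hvK
      have hvm : |u / m - 1| ≤ C0 * Real.log R / (S1 * R) := by
        rw [show u / m - 1 = (u - m) / m from by field_simp, abs_div,
          _root_.abs_of_pos hm0]
        gcongr
      calc |(u / m) ^ n - 1| ≤ n * K ^ n * |u / m - 1| := hpow
        _ ≤ n * K ^ n * (C0 * Real.log R / (S1 * R)) := by gcongr
        _ = (n : ℝ) * K ^ n * C0 / S1 * Real.log R / R := by ring
    have hdecomp : a (m / R) * pk z * ((((m ^ n : ℝ)) : ℂ))⁻¹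
          - a (u / R) * (z ^ n * ((((u ^ n : ℝ)) : ℂ))⁻¹)
        = (a (m / R) - a (u / R)) * (pk z * ((((m ^ n : ℝ)) : ℂ))⁻¹)
          + a (u / R) * ((pk z - z ^ n) * ((((m ^ n : ℝ)) : ℂ))⁻¹)
          + a (u / R) * (z ^ n * (((((m ^ n : ℝ)) : ℂ))⁻¹ - ((((u ^ n : ℝ)) : ℂ))⁻¹)) := by
      ring
    rw [hdecomp]
    have hX : ‖(a (m / R) - a (u / R)) * (pk z * ((((m ^ n : ℝ)) : ℂ))⁻¹)‖
        ≤ L * (C0 * Real.log R / R) * B := by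
      rw [norm_mul]
      calc ‖a (m / R) - a (u / R)‖ * ‖pk z * ((((m ^ n : ℝ)) : ℂ))⁻¹‖
          ≤ (L * (C0 * Real.log R / R)) * B :=
            mul_le_mul hD1 hBp (norm_nonneg _) (by positivity)
        _ = L * (C0 * Real.log R / R) * B := by ring
    have hY : ‖a (u / R) * ((pk z - z ^ n) * ((((m ^ n : ℝ)) : ℂ))⁻¹)‖
        ≤ L * (Cp' * K ^ n / (S1 * Real.log 2) * Real.log R / R) := by
      rw [norm_mul]
      exact mul_le_mul (hbd _) hT2i (norm_nonneg _) hL0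
    have hZ : ‖a (u / R) * (z ^ n * (((((m ^ n : ℝ)) : ℂ))⁻¹ - ((((u ^ n : ℝ)) : ℂ))⁻¹))‖
        ≤ L * ((n : ℝ) * K ^ n * C0 / S1 * Real.log R / R) := by
      rw [norm_mul]
      exact mul_le_mul (hbd _) hT3i (norm_nonneg _) hL0
    calc ‖(a (m / R) - a (u / R)) * (pk z * ((((m ^ n : ℝ)) : ℂ))⁻¹)
          + a (u / R) * ((pk z - z ^ n) * ((((m ^ n : ℝ)) : ℂ))⁻¹)
          + a (u / R) * (z ^ n * (((((m ^ n : ℝ)) : ℂ))⁻¹ - ((((u ^ n : ℝ)) : ℂ))⁻¹))‖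
        ≤ ‖(a (m / R) - a (u / R)) * (pk z * ((((m ^ n : ℝ)) : ℂ))⁻¹)‖
          + ‖a (u / R) * ((pk z - z ^ n) * ((((m ^ n : ℝ)) : ℂ))⁻¹)‖
          + ‖a (u / R) * (z ^ n * (((((m ^ n : ℝ)) : ℂ))⁻¹ - ((((u ^ n : ℝ)) : ℂ))⁻¹))‖ :=
          norm_add₃_le
      _ ≤ L * (C0 * Real.log R / R) * B
          + L * (Cp' * K ^ n / (S1 * Real.log 2) * Real.log R / R)
          + L * ((n : ℝ) * K ^ n * C0 / S1 * Real.log R / R) := by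
          linarith
      _ = (L * C0 * B + L * (Cp' * K ^ n / (S1 * Real.log 2))
            + L * ((n : ℝ) * K ^ n * C0 / S1)) * Real.log R / R := by ring

/-- If the `a_k` are smooth and supported in `[r₀, r₁] ⊂ (0,∞)`, and the `p_k` satisfy
`p₀ = 1`, `p_{-k} = conj ∘ p_k` and `|p_k(z) - z^k| ≤ C_p |z|^{|k|-1}`, then there is a
constant `C` such that whenever `c₁R² ≤ t ≤ c₂R²` and `||z| - √(t/π)| ≤ C₀ log R` for a
Gaussian integer `z`, one has `|ψ(z,t,R) - φ(z/R)| ≤ C (log R)/R`. -/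
theorem stmt18 (N : ℕ) (a : ℤ → ℝ → ℂ) (r0 r1 : ℝ) (hr0 : 0 < r0) (hr01 : r0 ≤ r1)
    (hsmooth : ∀ k : ℤ, ContDiff ℝ (⊤ : ℕ∞) (a k))
    (hsupp : ∀ k : ℤ, Function.support (a k) ⊆ Set.Icc r0 r1)
    (haconj : ∀ (k : ℤ) (r : ℝ), a (-k) r = (starRingEnd ℂ) (a k r))
    (p : ℤ → ℂ → ℂ) (hp0 : ∀ z : ℂ, p 0 z = 1)
    (hpconj : ∀ (k : ℤ) (z : ℂ), p (-k) z = (starRingEnd ℂ) (p k z))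
    (Cp : ℝ)
    (hpapprox : ∀ k : ℤ, 1 ≤ k → ∀ z : ℂ,
      ‖p k z - z ^ k.toNat‖ ≤ Cp * ‖z‖ ^ (k.toNat - 1))
    (c1 c2 C0 : ℝ) (hc1 : 0 < c1) (hc2 : c1 ≤ c2) (hC0 : 0 < C0) :
    ∃ C : ℝ, ∀ R : ℝ, 2 ≤ R → ∀ t : ℝ, c1 * R ^ 2 ≤ t → t ≤ c2 * R ^ 2 →
      ∀ x y : ℤ,
        |‖(x : ℂ) + (y : ℂ) * Complex.I‖ - Real.sqrt (t / Real.pi)|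
            ≤ C0 * Real.log R →
        ‖psiFun N a p ((x : ℂ) + (y : ℂ) * Complex.I) t R
            - phiFun N a (((x : ℂ) + (y : ℂ) * Complex.I) / (R : ℂ))‖
          ≤ C * Real.log R / R := by
  classical
  -- per-k term bound
  have keyPos : ∀ k : ℤ, 1 ≤ k → ∃ Ck : ℝ, 0 ≤ Ck ∧ ∀ R : ℝ, 2 ≤ R → ∀ t : ℝ,
      c1 * R ^ 2 ≤ t → t ≤ c2 * R ^ 2 →
      ∀ z : ℂ, |‖z‖ - Real.sqrt (t / Real.pi)| ≤ C0 * Real.log R →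
      ‖a k (Real.sqrt (t / (Real.pi * R ^ 2))) * p k z *
            ((Real.sqrt (t / Real.pi) : ℂ)) ^ (-(k.natAbs : ℤ))
          - a k (‖z / (R : ℂ)‖) *
            Complex.exp ((k : ℂ) * (Complex.arg (z / (R : ℂ)) : ℂ) * Complex.I)‖
        ≤ Ck * Real.log R / R := by
    intro k hk
    obtain ⟨L, hL0, hlip, hbd⟩ := aux_lip (a k) r0 r1 (hsmooth k) (hsupp k)
    have hn : 1 ≤ k.toNat := by omega
    obtain ⟨Ck, hCk0, hCk⟩ := keyTerm (a k) r0 r1 hr0 L hL0 hlip hbd (hsupp k)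
      (p k) k.toNat hn (max Cp 0) (le_max_right _ _)
      (fun w => (hpapprox k hk w).trans
        (mul_le_mul_of_nonneg_right (le_max_left _ _) (pow_nonneg (norm_nonneg w) _)))
      c1 c2 C0 hc1 hC0
    refine ⟨Ck, hCk0, ?_⟩
    intro R hR t ht1 ht2 z hz
    have h1 : ((k.toNat : ℕ) : ℂ) = (k : ℂ) := by
      exact_mod_cast congrArg (Int.cast : ℤ → ℂ) (Int.toNat_of_nonneg (by omega))
    have h2 : ((k.toNat : ℕ) : ℤ) = (k.natAbs : ℤ) := by omega
    rw [← h1, ← h2]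
    exact hCk R hR t ht1 ht2 z hz
  have key : ∀ k : ℤ, ∃ Ck : ℝ, 0 ≤ Ck ∧ ∀ R : ℝ, 2 ≤ R → ∀ t : ℝ,
      c1 * R ^ 2 ≤ t → t ≤ c2 * R ^ 2 →
      ∀ z : ℂ, |‖z‖ - Real.sqrt (t / Real.pi)| ≤ C0 * Real.log R →
      ‖a k (Real.sqrt (t / (Real.pi * R ^ 2))) * p k z *
            ((Real.sqrt (t / Real.pi) : ℂ)) ^ (-(k.natAbs : ℤ))
          - a k (‖z / (R : ℂ)‖) *
            Complex.exp ((k : ℂ) * (Complex.arg (z / (R : ℂ)) : ℂ) * Complex.I)‖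
        ≤ Ck * Real.log R / R := by
    intro k
    rcases lt_trichotomy k 0 with hneg | h0 | hpos
    · obtain ⟨Ck, hCk0, hCk⟩ := keyPos (-k) (by omega)
      refine ⟨Ck, hCk0, ?_⟩
      intro R hR t ht1 ht2 z hz
      have e1 : ∀ x : ℝ, (starRingEnd ℂ) (a (-k) x) = a k x := fun x => by
        simpa [neg_neg] using (haconj (-k) x).symm
      have e2 : (starRingEnd ℂ) (p (-k) z) = p k z := by
        simpa [neg_neg] using (hpconj (-k) z).symm
      have e3 : (starRingEnd ℂ)
            (((Real.sqrt (t / Real.pi) : ℝ) : ℂ) ^ (-(((-k).natAbs : ℕ) : ℤ)))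
          = ((Real.sqrt (t / Real.pi) : ℝ) : ℂ) ^ (-((k.natAbs : ℕ) : ℤ)) := by
        rw [map_zpow₀, Complex.conj_ofReal]
        congr 1
        omega
      have e4 : (starRingEnd ℂ)
            (Complex.exp (((-k : ℤ) : ℂ) * (Complex.arg (z / (R : ℂ)) : ℂ) * Complex.I))
          = Complex.exp ((k : ℂ) * (Complex.arg (z / (R : ℂ)) : ℂ) * Complex.I) := by
        rw [← Complex.exp_conj]
        congr 1
        simp only [map_mul, Complex.conj_ofReal, Complex.conj_I, map_neg, map_intCast]
        push_cast
        ring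
      have hconj : a k (Real.sqrt (t / (Real.pi * R ^ 2))) * p k z *
            ((Real.sqrt (t / Real.pi) : ℂ)) ^ (-(k.natAbs : ℤ))
          - a k (‖z / (R : ℂ)‖) *
            Complex.exp ((k : ℂ) * (Complex.arg (z / (R : ℂ)) : ℂ) * Complex.I)
          = (starRingEnd ℂ) (a (-k) (Real.sqrt (t / (Real.pi * R ^ 2))) * p (-k) z *
            ((Real.sqrt (t / Real.pi) : ℂ)) ^ (-(((-k).natAbs : ℕ) : ℤ))
          - a (-k) (‖z / (R : ℂ)‖) *
            Complex.exp (((-k : ℤ) : ℂ) * (Complex.arg (z / (R : ℂ)) : ℂ) * Complex.I)) := by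
        rw [map_sub, map_mul, map_mul, map_mul, e1, e1, e2, e3, e4]
      rw [hconj, RCLike.norm_conj]
      exact hCk R hR t ht1 ht2 z hz
    · subst h0
      obtain ⟨L, hL0, hlip, hbd⟩ := aux_lip (a 0) r0 r1 (hsmooth 0) (hsupp 0)
      refine ⟨L * C0, by positivity, ?_⟩
      intro R hR t ht1 ht2 z hz
      have hπ : (0:ℝ) < Real.pi := Real.pi_pos
      have hR0 : (0:ℝ) < R := by linarith
      have ht0 : (0:ℝ) < t := lt_of_lt_of_le (by positivity) ht1
      set m : ℝ := Real.sqrt (t / Real.pi) with hmdef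
      have hsR : Real.sqrt (t / (Real.pi * R ^ 2)) = m / R := by
        rw [show t / (Real.pi * R ^ 2) = (t / Real.pi) / R ^ 2 by ring,
          Real.sqrt_div (by positivity) (R ^ 2), Real.sqrt_sq hR0.le]
      set u : ℝ := ‖z‖ with hudef
      have habsw : ‖z / (R : ℂ)‖ = u / R := by
        rw [norm_div]
        simp [abs_of_pos hR0, hudef]
      have hlogpos : (0:ℝ) < Real.log R :=
        lt_of_lt_of_le (Real.log_pos (by norm_num)) (Real.log_le_log (by norm_num) hR)
      simp only [hsR, habsw, hp0, Int.natAbs_zero, Nat.cast_zero, neg_zero, zpow_zero,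
        mul_one, Int.cast_zero, zero_mul, Complex.exp_zero]
      have h1 := hlip (m / R) (u / R)
      have h2 : |m / R - u / R| = |u - m| / R := by
        rw [div_sub_div_same, abs_div, _root_.abs_of_pos hR0, abs_sub_comm]
      rw [h2] at h1
      calc ‖a 0 (m / R) - a 0 (u / R)‖ ≤ L * (|u - m| / R) := h1
        _ ≤ L * (C0 * Real.log R / R) := by gcongr
        _ = L * C0 * Real.log R / R := by ring
    · exact keyPos k hpos
  choose Cf hCf0 hCf using key
  refine ⟨∑ k ∈ Finset.Icc (-(N : ℤ)) (N : ℤ), Cf k, ?_⟩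
  intro R hR t ht1 ht2 x y hz
  set z : ℂ := (x : ℂ) + (y : ℂ) * Complex.I with hzdef
  have hdiff : psiFun N a p z t R - phiFun N a (z / (R : ℂ))
      = ∑ k ∈ Finset.Icc (-(N : ℤ)) (N : ℤ),
        (a k (Real.sqrt (t / (Real.pi * R ^ 2))) * p k z *
            ((Real.sqrt (t / Real.pi) : ℂ)) ^ (-(k.natAbs : ℤ))
          - a k (‖z / (R : ℂ)‖) *
            Complex.exp ((k : ℂ) * (Complex.arg (z / (R : ℂ)) : ℂ) * Complex.I)) := by
    rw [psiFun, phiFun, ← Finset.sum_sub_distrib]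
  rw [hdiff]
  calc ‖∑ k ∈ Finset.Icc (-(N : ℤ)) (N : ℤ),
        (a k (Real.sqrt (t / (Real.pi * R ^ 2))) * p k z *
            ((Real.sqrt (t / Real.pi) : ℂ)) ^ (-(k.natAbs : ℤ))
          - a k (‖z / (R : ℂ)‖) *
            Complex.exp ((k : ℂ) * (Complex.arg (z / (R : ℂ)) : ℂ) * Complex.I))‖
      ≤ ∑ k ∈ Finset.Icc (-(N : ℤ)) (N : ℤ),
        ‖a k (Real.sqrt (t / (Real.pi * R ^ 2))) * p k z *
            ((Real.sqrt (t / Real.pi) : ℂ)) ^ (-(k.natAbs : ℤ))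
          - a k (‖z / (R : ℂ)‖) *
            Complex.exp ((k : ℂ) * (Complex.arg (z / (R : ℂ)) : ℂ) * Complex.I)‖ :=
        norm_sum_le _ _
    _ ≤ ∑ k ∈ Finset.Icc (-(N : ℤ)) (N : ℤ), Cf k * Real.log R / R :=
        Finset.sum_le_sum (fun k _ => hCf k R hR t ht1 ht2 z hz)
    _ = (∑ k ∈ Finset.Icc (-(N : ℤ)) (N : ℤ), Cf k) * Real.log R / R := by
        rw [Finset.sum_mul, Finset.sum_div]
end
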